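/- arXiv:2301.12977 — 3 statements merged into one kernel-verified Lean document; each statement's English description precedes it below -/
import Mathlib

section
/- Let 𝓘 = (V,𝒞) be an ℓ-minimal CSP instance over H whose constraints are Aut(ℍ)-invariant and preserved by p₁. Let v,w ∈ [V]^ℓ, and suppose some constraint C of 𝓘 contains all variables of v and of w in its scope and contains an injective mapping. Let E¹_v ⊆ proj_v(𝓘) be a union of Aut(ℍ)-orbits containing every injective tuple of proj_v(𝓘), and let E¹_w := {a ∈ H^ℓ : ∃ b ∈ E¹_v with (b,a) ∈ proj_{(v,w)}(C)}. Then E¹_w contains every injective tuple of proj_w(𝓘). -/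
open scoped Classical

/-- A constraint of a CSP instance: a scope (a finite set of variables) together with a
set of assignments.  Assignments are recorded as total functions on the variables, of which
only the values on the scope are relevant. -/
structure Constraint (V : Type*) (A : Type*) where
  scope : Finset V
  maps : Set (V → A)

/-- A CSP instance: a finite list of constraints. -/
structure CSPInstance (V : Type*) (A : Type*) where
  constraints : List (Constraint V A)

section CSP

variable {V : Type*} {A : Type*}

/-- Projection of a constraint to a tuple of variables. -/
def Constraint.proj {k : ℕ} (C : Constraint V A) (t : Fin k → V) : Set (Fin k → A) :=
  (fun g => g ∘ t) '' C.maps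

/-- Projection of a constraint to a single variable. -/
def Constraint.proj1 (C : Constraint V A) (x : V) : Set A :=
  (fun g => g x) '' C.maps

/-- A solution of a CSP instance. -/
def CSPInstance.IsSolution (I : CSPInstance V A) (f : V → A) : Prop :=
  ∀ C ∈ I.constraints, ∃ g ∈ C.maps, ∀ x ∈ C.scope, f x = g x

/-- A CSP instance is trivial if some constraint is empty. -/
def CSPInstance.Trivial (I : CSPInstance V A) : Prop :=
  ∃ C ∈ I.constraints, C.maps = ∅

/-- A CSP instance is non-trivial if no constraint is empty. -/
def CSPInstance.NonTrivial (I : CSPInstance V A) : Prop :=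
  ∀ C ∈ I.constraints, C.maps.Nonempty

/-- Projection of an instance to a tuple of variables (for minimal instances the projections
of the individual constraints all agree). -/
def CSPInstance.proj {k : ℕ} (I : CSPInstance V A) (t : Fin k → V) : Set (Fin k → A) :=
  { a | ∃ C ∈ I.constraints, (∀ i, t i ∈ C.scope) ∧ a ∈ C.proj t }

/-- Projection of an instance to a single variable. -/
def CSPInstance.proj1 (I : CSPInstance V A) (x : V) : Set A :=
  { b | ∃ C ∈ I.constraints, x ∈ C.scope ∧ b ∈ C.proj1 x }

/-- Projection of an instance to a pair of tuples of variables. -/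
def CSPInstance.pairProj {k : ℕ} (I : CSPInstance V A) (t₁ t₂ : Fin k → V) :
    Set ((Fin k → A) × (Fin k → A)) :=
  { p | ∃ C ∈ I.constraints, (∀ i, t₁ i ∈ C.scope) ∧ (∀ i, t₂ i ∈ C.scope) ∧
      ∃ f ∈ C.maps, f ∘ t₁ = p.1 ∧ f ∘ t₂ = p.2 }

/-- The projections of any two constraints to a common tuple of at most `m` variables agree. -/
def ProjConsistent (m : ℕ) (I : CSPInstance V A) : Prop :=
  ∀ (k : ℕ), k ≤ m → ∀ t : Fin k → V, ∀ C ∈ I.constraints, ∀ C' ∈ I.constraints,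
    (∀ i, t i ∈ C.scope) → (∀ i, t i ∈ C'.scope) → C.proj t = C'.proj t

/-- `(m,n)`-minimality of a CSP instance. -/
def MNMinimal (m n : ℕ) (I : CSPInstance V A) : Prop :=
  (∀ C ∈ I.constraints, C.scope.card ≤ n) ∧
  (∀ W : Finset V, W.card ≤ m → ∃ C ∈ I.constraints, W ⊆ C.scope) ∧
  ProjConsistent m I

/-- `ℓ`-minimality of a CSP instance. -/
def LMinimal (ℓ : ℕ) (I : CSPInstance V A) : Prop :=
  (∀ W : Finset V, W.card ≤ ℓ → ∃ C ∈ I.constraints, W ⊆ C.scope) ∧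
  ProjConsistent ℓ I

/-- A set of assignments is preserved by a binary operation, applied componentwise. -/
def Preserves2 {X : Type*} (p : A → A → A) (Q : Set (X → A)) : Prop :=
  ∀ f ∈ Q, ∀ g ∈ Q, (fun x => p (f x) (g x)) ∈ Q

/-- A set of assignments is preserved by a ternary operation, applied componentwise. -/
def Preserves3 {X : Type*} (p : A → A → A → A) (Q : Set (X → A)) : Prop :=
  ∀ f ∈ Q, ∀ g ∈ Q, ∀ h ∈ Q, (fun x => p (f x) (g x) (h x)) ∈ Q

/-- A set of assignments is preserved by a `k`-ary operation, applied componentwise. -/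
def PreservesK {X : Type*} {k : ℕ} (p : (Fin k → A) → A) (Q : Set (X → A)) : Prop :=
  ∀ rows : Fin k → (X → A), (∀ j, rows j ∈ Q) → (fun x => p (fun j => rows j x)) ∈ Q

/-- `vs, Cs` is a path in the instance `I`. -/
def IsPath (I : CSPInstance V A) {k : ℕ} (vs : Fin (k+1) → V)
    (Cs : Fin k → Constraint V A) : Prop :=
  ∀ i : Fin k, Cs i ∈ I.constraints ∧ vs i.castSucc ∈ (Cs i).scope ∧ vs i.succ ∈ (Cs i).scope

/-- The path `vs, Cs` connects `a` to `b`. -/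
def PathConnects {k : ℕ} (vs : Fin (k+1) → V) (Cs : Fin k → Constraint V A)
    (a b : A) : Prop :=
  ∃ c : Fin (k+1) → A, c 0 = a ∧ c (Fin.last k) = b ∧
    ∀ i : Fin k, ∃ f ∈ (Cs i).maps, f (vs i.castSucc) = c i.castSucc ∧ f (vs i.succ) = c i.succ

/-- `a` and `b` are linked at the variable `x` (the linkedness congruence): some path from `x`
to `x` connects `a` to `b`. -/
def Linked (I : CSPInstance V A) (x : V) (a b : A) : Prop :=
  ∃ (k : ℕ) (vs : Fin (k+1) → V) (Cs : Fin k → Constraint V A),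
    1 ≤ k ∧ IsPath I vs Cs ∧ vs 0 = x ∧ vs (Fin.last k) = x ∧ PathConnects vs Cs a b

/-- The instance `I_eq`: each constraint is closed under the full symmetric group. -/
def CSPInstance.eqClosure (I : CSPInstance V A) : CSPInstance V A :=
  ⟨I.constraints.map (fun C =>
    ⟨C.scope, { g | ∃ f ∈ C.maps, ∃ α : Equiv.Perm A, g = ⇑α ∘ f }⟩)⟩

/-- The instance `I^{t ∈ P}`: every constraint whose scope contains all variables of the
tuple `t` is restricted to the assignments sending `t` into `P`. -/
noncomputable def CSPInstance.restrictTuple {k : ℕ} (I : CSPInstance V A) (t : Fin k → V)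
    (P : Set (Fin k → A)) : CSPInstance V A :=
  ⟨I.constraints.map (fun C =>
    if (∀ i, t i ∈ C.scope) then ⟨C.scope, { g ∈ C.maps | (g ∘ t) ∈ P }⟩ else C)⟩

/-- The restriction of an instance to a set `S` of its variables. -/
noncomputable def CSPInstance.restrictVars (I : CSPInstance V A) (S : Set V) :
    CSPInstance V A :=
  ⟨I.constraints.map (fun C => ⟨C.scope.filter (· ∈ S), C.maps⟩)⟩

/-- `K` refines `L`: the constraints correspond to each other, with equal scopes and smaller
sets of assignments. -/
def Refines (K L : CSPInstance V A) : Prop :=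
  List.Forall₂ (fun D C => D.scope = C.scope ∧ D.maps ⊆ C.maps) K.constraints L.constraints

/-- `K` is the `(m,n)`-minimal instance equivalent to `I`: the inclusion-largest family of
subsets of the constraints of `I` whose projections to common tuples of at most `m` variables
agree. -/
def IsMNMinimalEquiv (m : ℕ) (K I : CSPInstance V A) : Prop :=
  Refines K I ∧ ProjConsistent m K ∧
  ∀ L : CSPInstance V A, Refines L I → ProjConsistent m L → Refines L K

end CSP

section Hypergraph

variable {H : Type*} {ℓ : ℕ}

/-- `α` is an automorphism of the hypergraph `(H, R)`. -/
def IsAut (R : Set (Fin ℓ → H)) (α : Equiv.Perm H) : Prop :=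
  ∀ t : Fin ℓ → H, (⇑α ∘ t ∈ R ↔ t ∈ R)

/-- `α` is an automorphism of the ordered hypergraph `(H, R, <)`. -/
def IsAutOrd [LinearOrder H] (R : Set (Fin ℓ → H)) (α : Equiv.Perm H) : Prop :=
  IsAut R α ∧ StrictMono ⇑α

/-- The orbit of a `q`-tuple under `Aut(H, R)`. -/
def orbitOf (R : Set (Fin ℓ → H)) {q : ℕ} (a : Fin q → H) : Set (Fin q → H) :=
  { b | ∃ α : Equiv.Perm H, IsAut R α ∧ ⇑α ∘ a = b }

/-- The orbit of a `q`-tuple under `Aut(H, R, <)`. -/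
def orbitOrdOf [LinearOrder H] (R : Set (Fin ℓ → H)) {q : ℕ} (a : Fin q → H) :
    Set (Fin q → H) :=
  { b | ∃ α : Equiv.Perm H, IsAutOrd R α ∧ ⇑α ∘ a = b }

/-- The orbit `E` of injective `ℓ`-tuples in `R`. -/
def ESet (R : Set (Fin ℓ → H)) : Set (Fin ℓ → H) :=
  { a | Function.Injective a ∧ a ∈ R }

/-- The orbit `N` of injective `ℓ`-tuples not in `R`. -/
def NSet (R : Set (Fin ℓ → H)) : Set (Fin ℓ → H) :=
  { a | Function.Injective a ∧ a ∉ R }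

/-- `O` is the orbit of a non-injective `ℓ`-tuple. -/
def IsNonInjOrbit (R : Set (Fin ℓ → H)) (O : Set (Fin ℓ → H)) : Prop :=
  ∃ a : Fin ℓ → H, ¬ Function.Injective a ∧ O = orbitOf R a

/-- A binary operation is canonical with respect to `(H, R, <)`. -/
def Canonical2 [LinearOrder H] (R : Set (Fin ℓ → H)) (p : H → H → H) : Prop :=
  ∀ (q : ℕ) (a₁ a₂ b₁ b₂ : Fin q → H), b₁ ∈ orbitOrdOf R a₁ → b₂ ∈ orbitOrdOf R a₂ →
    (fun i => p (b₁ i) (b₂ i)) ∈ orbitOrdOf R (fun i => p (a₁ i) (a₂ i))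

/-- A ternary operation is canonical with respect to `(H, R, <)`. -/
def Canonical3 [LinearOrder H] (R : Set (Fin ℓ → H)) (p : H → H → H → H) : Prop :=
  ∀ (q : ℕ) (a₁ a₂ a₃ b₁ b₂ b₃ : Fin q → H),
    b₁ ∈ orbitOrdOf R a₁ → b₂ ∈ orbitOrdOf R a₂ → b₃ ∈ orbitOrdOf R a₃ →
    (fun i => p (b₁ i) (b₂ i) (b₃ i)) ∈ orbitOrdOf R (fun i => p (a₁ i) (a₂ i) (a₃ i))

/-- The assumed properties of the binary injection `p₁`: it is injective, canonical with
respect to `(H, R, <)`, acts as the first projection on `{E, N}`, and acts lexicographically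
on the order. -/
structure P1Props [LinearOrder H] (R : Set (Fin ℓ → H)) (p₁ : H → H → H) : Prop where
  inj : Function.Injective (fun x : H × H => p₁ x.1 x.2)
  canonical : Canonical2 R p₁
  firstProj : ∀ a b : Fin ℓ → H, Function.Injective a → Function.Injective b →
    (fun i => p₁ (a i) (b i)) ∈ orbitOf R a
  lex : ∀ x y x' y' : H, (y < y' ∨ (y = y' ∧ x < x')) → p₁ x y < p₁ x' y'

/-- The assumed properties of the ternary injection `m`: it is injective, canonical with
respect to `(H, R, <)`, and acts as a minority on `{E, N}`. -/
structure MProps [LinearOrder H] (R : Set (Fin ℓ → H)) (m : H → H → H → H) : Prop where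
  inj : Function.Injective (fun x : H × H × H => m x.1 x.2.1 x.2.2)
  canonical : Canonical3 R m
  minority : ∀ a b : Fin ℓ → H, Function.Injective a → Function.Injective b →
    (fun i => m (a i) (a i) (b i)) ∈ orbitOf R b ∧
    (fun i => m (a i) (b i) (a i)) ∈ orbitOf R b ∧
    (fun i => m (b i) (a i) (a i)) ∈ orbitOf R b

/-- The ambient assumptions on the ordered `ℓ`-hypergraph `(H, R, <)`. -/
structure HContext (H : Type*) [LinearOrder H] (ℓ : ℕ) (R : Set (Fin ℓ → H)) : Prop where
  three_le : 3 ≤ ℓ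
  countable : Countable H
  infinite : Infinite H
  R_inj : ∀ a ∈ R, Function.Injective a
  R_symm : ∀ σ : Equiv.Perm (Fin ℓ), ∀ a ∈ R, (a ∘ ⇑σ) ∈ R
  E_nonempty : (ESet R).Nonempty
  N_nonempty : (NSet R).Nonempty
  orbit_E : ∀ a b : Fin ℓ → H, a ∈ ESet R → b ∈ ESet R → b ∈ orbitOf R a
  orbit_N : ∀ a b : Fin ℓ → H, a ∈ NSet R → b ∈ NSet R → b ∈ orbitOf R a
  inc_order : ∀ (q : ℕ) (a : Fin q → H), Function.Injective a →
    ∃ α : Equiv.Perm H, IsAut R α ∧ StrictMono (⇑α ∘ a)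
  oligo : ∀ q : ℕ, { O : Set (Fin q → H) | ∃ a : Fin q → H, O = orbitOrdOf R a }.Finite

/-- Homogeneity of `(H, R)`. -/
def Homogeneous (R : Set (Fin ℓ → H)) : Prop :=
  ∀ (s : Finset H) (e : H → H), Set.InjOn e ↑s →
    (∀ t : Fin ℓ → H, (∀ i, t i ∈ s) → (t ∈ R ↔ (e ∘ t) ∈ R)) →
    ∃ α : Equiv.Perm H, IsAut R α ∧ ∀ x ∈ s, α x = e x

/-- Homogeneity of `(H, R, <)`. -/
def HomogeneousOrd [LinearOrder H] (R : Set (Fin ℓ → H)) : Prop :=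
  ∀ (s : Finset H) (e : H → H), Set.InjOn e ↑s →
    (∀ x ∈ s, ∀ y ∈ s, x < y → e x < e y) →
    (∀ t : Fin ℓ → H, (∀ i, t i ∈ s) → (t ∈ R ↔ (e ∘ t) ∈ R)) →
    ∃ α : Equiv.Perm H, IsAutOrd R α ∧ ∀ x ∈ s, α x = e x

/-- The age of `(H, R)` is finitely bounded with bound `b`: a finite `ℓ`-hypergraph embeds
into `(H, R)` iff each of its induced substructures on at most `b` vertices embeds. -/
def FinBounded (b : ℕ) (R : Set (Fin ℓ → H)) : Prop :=
  ∀ (q : ℕ) (Q : Set (Fin ℓ → Fin q)),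
    (∀ t ∈ Q, Function.Injective t) →
    (∀ σ : Equiv.Perm (Fin ℓ), ∀ t ∈ Q, (t ∘ ⇑σ) ∈ Q) →
    ((∀ s : Finset (Fin q), s.card ≤ b →
        ∃ e : Fin q → H, Set.InjOn e ↑s ∧
          ∀ t : Fin ℓ → Fin q, (∀ i, t i ∈ s) → (t ∈ Q ↔ (e ∘ t) ∈ R)) ↔
      ∃ e : Fin q → H, Function.Injective e ∧ ∀ t : Fin ℓ → Fin q, (t ∈ Q ↔ (e ∘ t) ∈ R))

/-- The tuple `a` lies in a deterministic orbit: there is an automorphism `α` such that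
`p₁(O_<(α a), O_<(e)) = p₁(O_<(α a), O_<(n))` for increasing representatives `e ∈ E`,
`n ∈ N`. -/
def DeterministicAt [LinearOrder H] (R : Set (Fin ℓ → H)) (p₁ : H → H → H)
    (a : Fin ℓ → H) : Prop :=
  ∃ α : Equiv.Perm H, IsAut R α ∧
    ∀ e n : Fin ℓ → H, e ∈ ESet R → n ∈ NSet R → StrictMono e → StrictMono n →
      (fun i => p₁ (α (a i)) (n i)) ∈ orbitOrdOf R (fun i => p₁ (α (a i)) (e i))

/-- `O` is a deterministic (non-injective) orbit. -/
def IsDeterministicOrbit [LinearOrder H] (R : Set (Fin ℓ → H)) (p₁ : H → H → H)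
    (O : Set (Fin ℓ → H)) : Prop :=
  IsNonInjOrbit R O ∧ ∀ a ∈ O, DeterministicAt R p₁ a

/-- `O` is a non-deterministic (non-injective) orbit. -/
def IsNonDeterministicOrbit [LinearOrder H] (R : Set (Fin ℓ → H)) (p₁ : H → H → H)
    (O : Set (Fin ℓ → H)) : Prop :=
  IsNonInjOrbit R O ∧ ¬ ∀ a ∈ O, DeterministicAt R p₁ a

/-- A constraint over `H` is invariant under `Aut(H, R)`. -/
def Constraint.AutInvariant {V : Type*} (R : Set (Fin ℓ → H)) (C : Constraint V H) : Prop :=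
  ∀ f ∈ C.maps, ∀ α : Equiv.Perm H, IsAut R α → (⇑α ∘ f) ∈ C.maps

/-- An instance over `H` is `p₁,m`-closed: every constraint is `Aut(H,R)`-invariant and
preserved by `p₁` and by `m`. -/
def PMClosed {V : Type*} (R : Set (Fin ℓ → H)) (p₁ : H → H → H) (m : H → H → H → H)
    (I : CSPInstance V H) : Prop :=
  ∀ C ∈ I.constraints, C.AutInvariant R ∧ Preserves2 p₁ C.maps ∧ Preserves3 m C.maps

/-- The increasing injective `ℓ`-tuples of variables. -/
abbrev IncTup (V : Type*) [LinearOrder V] (ℓ : ℕ) := { t : Fin ℓ → V // StrictMono t }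

/-- The finitisation of a constraint: a constraint over the set of orbits of `ℓ`-tuples
(coded as the sets of tuples that are orbits), with the increasing `ℓ`-tuples of scope
variables as its scope. -/
noncomputable def Constraint.finitise {V : Type*} [LinearOrder V] [Fintype V]
    (R : Set (Fin ℓ → H)) (C : Constraint V H) :
    Constraint (IncTup V ℓ) (Set (Fin ℓ → H)) where
  scope := Finset.univ.filter (fun t : IncTup V ℓ => ∀ i, t.1 i ∈ C.scope)
  maps := { g | (∀ t : IncTup V ℓ, (∀ i, t.1 i ∈ C.scope) → ∃ a : Fin ℓ → H, g t = orbitOf R a) ∧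
      ∃ f ∈ C.maps, ∀ t : IncTup V ℓ, (∀ i, t.1 i ∈ C.scope) → (f ∘ t.1) ∈ g t }

/-- The finitisation of an instance. -/
noncomputable def CSPInstance.finitise {V : Type*} [LinearOrder V] [Fintype V]
    (R : Set (Fin ℓ → H)) (I : CSPInstance V H) :
    CSPInstance (IncTup V ℓ) (Set (Fin ℓ → H)) :=
  ⟨I.constraints.map (Constraint.finitise R)⟩

/-- The injectivisation of an instance over the orbits of `ℓ`-tuples: all assignments taking
a value outside the two injective orbits `E`, `N` are removed from every constraint. -/
def CSPInstance.injectivise {W : Type*} (R : Set (Fin ℓ → H))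
    (J : CSPInstance W (Set (Fin ℓ → H))) : CSPInstance W (Set (Fin ℓ → H)) :=
  ⟨J.constraints.map (fun C =>
    ⟨C.scope, { g ∈ C.maps | ∀ w ∈ C.scope, g w = ESet R ∨ g w = NSet R }⟩)⟩

/-- The injective finitisation of an instance `I` on a set `S` of increasing `ℓ`-tuples of
variables: the restriction to `S` of the injectivisation of the finitisation of `I`. -/
noncomputable def injFinitisation {V : Type*} [LinearOrder V] [Fintype V]
    (R : Set (Fin ℓ → H)) (I : CSPInstance V H) (S : Set (IncTup V ℓ)) :
    CSPInstance (IncTup V ℓ) (Set (Fin ℓ → H)) :=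
  ((I.finitise R).injectivise R).restrictVars S

/-- An `ℓ`-minimal instance is eq-subdirect: for every increasing tuple `t` of variables and
every non-injective orbit `O ⊆ proj_t(I)`, the instance `(I^{t ∈ O})_eq` has a solution. -/
def EqSubdirect {V : Type*} [LinearOrder V] (R : Set (Fin ℓ → H))
    (I : CSPInstance V H) : Prop :=
  ∀ t : Fin ℓ → V, StrictMono t → ∀ O : Set (Fin ℓ → H), IsNonInjOrbit R O →
    O ⊆ I.proj t → ∃ f : V → H, ((I.restrictTuple t O).eqClosure).IsSolution f

/-- Inj-irreducibility of a non-trivial `ℓ`-minimal instance. -/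
def InjIrreducible {V : Type*} [LinearOrder V] [Fintype V] [LinearOrder H]
    (R : Set (Fin ℓ → H)) (p₁ : H → H → H) (I : CSPInstance V H) : Prop :=
  I.NonTrivial ∧ LMinimal ℓ I ∧
  ∀ S : Set (IncTup V ℓ),
    (∃ g, ((((I.finitise R).restrictVars S)).injectivise R).IsSolution g) ∨
    (∃ t ∈ S, ESet R ∈ ((I.finitise R).restrictVars S).proj1 t ∧
      NSet R ∈ ((I.finitise R).restrictVars S).proj1 t ∧
      ¬ Linked ((I.finitise R).restrictVars S) t (ESet R) (NSet R)) ∨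
    (∃ t ∈ S, ∃ O P : Set (Fin ℓ → H), (O = ESet R ∨ O = NSet R) ∧
      IsNonDeterministicOrbit R p₁ P ∧
      Linked ((I.finitise R).restrictVars S) t O P)

/-- The value in `ℤ₂` attached to an (injective) `ℓ`-tuple: `E` is identified with `1` and
`N` with `0`. -/
noncomputable def orbVal (R : Set (Fin ℓ → H)) (a : Fin ℓ → H) : ZMod 2 :=
  if a ∈ R then 1 else 0

/-- The injective finitisation of a single constraint, coded over `ℤ₂`: the set of maps `g`
from increasing `ℓ`-tuples of scope variables to `ℤ₂ = {E, N}` arising from assignments in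
`C` that are injective on every such tuple. -/
noncomputable def injFinMaps {V : Type*} [LinearOrder V] (R : Set (Fin ℓ → H))
    (C : Constraint V H) : Set ((Fin ℓ → V) → ZMod 2) :=
  { g | ∃ f ∈ C.maps, ∀ t : Fin ℓ → V, StrictMono t → (∀ i, t i ∈ C.scope) →
      Function.Injective (f ∘ t) ∧ orbVal R (f ∘ t) = g t }

end Hypergraph

section RelStruct

/-- A relational structure on a domain `A`. -/
structure RelStruct (A : Type*) where
  ι : Type
  ar : ι → ℕ
  rel : ∀ i : ι, Set (Fin (ar i) → A)

variable {A : Type*}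

/-- A `k`-ary polymorphism of a relational structure. -/
def IsPolymorphism (S : RelStruct A) {k : ℕ} (g : (Fin k → A) → A) : Prop :=
  ∀ (i : S.ι) (rows : Fin k → (Fin (S.ar i) → A)),
    (∀ j, rows j ∈ S.rel i) → (fun x => g (fun j => rows j x)) ∈ S.rel i

/-- A binary polymorphism of a relational structure. -/
def IsPolymorphism2 (S : RelStruct A) (f : A → A → A) : Prop :=
  ∀ (i : S.ι), ∀ s ∈ S.rel i, ∀ t ∈ S.rel i, (fun x => f (s x) (t x)) ∈ S.rel i

/-- An automorphism of a relational structure. -/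
def IsAutomorphismS (S : RelStruct A) (α : Equiv.Perm A) : Prop :=
  ∀ (i : S.ι) (t : Fin (S.ar i) → A), (⇑α ∘ t) ∈ S.rel i ↔ t ∈ S.rel i

/-- A relation preserved by every polymorphism of the structure. -/
def PolInvariantRel (S : RelStruct A) {q : ℕ} (Q : Set (Fin q → A)) : Prop :=
  ∀ (k : ℕ) (g : (Fin k → A) → A), IsPolymorphism S g →
    ∀ rows : Fin k → (Fin q → A), (∀ j, rows j ∈ Q) → (fun x => g (fun j => rows j x)) ∈ Q

/-- A relation invariant under every automorphism of the structure. -/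
def AutInvariantRel (S : RelStruct A) {q : ℕ} (Q : Set (Fin q → A)) : Prop :=
  ∀ α : Equiv.Perm A, IsAutomorphismS S α → ∀ t ∈ Q, (⇑α ∘ t) ∈ Q

/-- A constraint preserved by every polymorphism of the structure. -/
def ConstraintPolInv {V : Type*} (S : RelStruct A) (C : Constraint V A) : Prop :=
  ∀ (k : ℕ) (g : (Fin k → A) → A), IsPolymorphism S g →
    ∀ rows : Fin k → (V → A), (∀ j, rows j ∈ C.maps) → (fun x => g (fun j => rows j x)) ∈ C.maps

/-- A constraint invariant under every automorphism of the structure. -/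
def ConstraintAutInvS {V : Type*} (S : RelStruct A) (C : Constraint V A) : Prop :=
  ∀ α : Equiv.Perm A, IsAutomorphismS S α → ∀ f ∈ C.maps, (⇑α ∘ f) ∈ C.maps

/-- `B` is a binary absorbing subuniverse of `R₀` in the structure `S`, written `B ◁ R₀`. -/
def BinAbsorbs (S : RelStruct A) {k : ℕ} (B R₀ : Set (Fin k → A)) : Prop :=
  ∃ f : A → A → A, IsPolymorphism2 S f ∧
    ∀ a ∈ R₀, ∀ b ∈ B, (fun x => f (a x) (b x)) ∈ B ∧ (fun x => f (b x) (a x)) ∈ B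

/-- The automorphism group of the structure is oligomorphic. -/
def OligomorphicS (S : RelStruct A) : Prop :=
  ∀ q : ℕ, { O : Set (Fin q → A) | ∃ t : Fin q → A,
    O = { s | ∃ α : Equiv.Perm A, IsAutomorphismS S α ∧ ⇑α ∘ t = s } }.Finite

/-- The instance obtained by adding, for every `k`-tuple `t` of variables such that
`S₀ ∩ proj_t(I)` is a binary absorbing subuniverse of `R₀`, the constraint forcing `t`
into `S₀`. -/
noncomputable def addAbsorbConstraints {V : Type*} [Fintype V] {k : ℕ}
    (I : CSPInstance V A) (S₀ R₀ : Set (Fin k → A)) (S : RelStruct A) : CSPInstance V A :=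
  ⟨I.constraints ++ ((Finset.univ.filter (fun t : Fin k → V =>
      I.proj t ⊆ R₀ ∧ (S₀ ∩ I.proj t).Nonempty ∧ BinAbsorbs S (S₀ ∩ I.proj t) R₀)).toList.map
    (fun t => ⟨Finset.univ.image t, { c : V → A | (c ∘ t) ∈ S₀ }⟩))⟩

end RelStruct

/-! An injective tuple `a = f ∘ w` in the projection of a constraint `C` is realised by an
assignment of `C` that is injective on the whole scope: combine `f` with an injective
assignment `h` via `p₁`, which keeps the scope injective and, acting as the first projection
on injective tuples, moves `a` only within its orbit; an automorphism then brings the tuple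
back to `a`. By `ℓ`-minimality every injective tuple of `proj_w(I)` lies in `proj_w(C)`, and
the realising assignment sends `v` to an injective tuple, which lies in `E¹_v`. -/

theorem IsAut.symm {H : Type*} {ℓ : ℕ} {R : Set (Fin ℓ → H)} {α : Equiv.Perm H}
    (hα : IsAut R α) : IsAut R α.symm := by
  intro t
  rw [← hα (⇑α.symm ∘ t), ← Function.comp_assoc, Equiv.self_comp_symm, Function.id_comp]

theorem CSPInstance.proj_subset_proj_of_projConsistent {V A : Type*} {m k : ℕ}
    {I : CSPInstance V A} (hI : ProjConsistent m I) (hk : k ≤ m) {t : Fin k → V}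
    {C : Constraint V A} (hC : C ∈ I.constraints) (ht : ∀ i, t i ∈ C.scope) :
    I.proj t ⊆ C.proj t := by
  rintro a ⟨C', hC', ht', ha⟩
  rwa [hI k hk t C' hC' C hC ht' ht] at ha

theorem Set.InjOn.binop_right {X H : Type*} {p : H → H → H}
    (hp : Function.Injective (fun x : H × H => p x.1 x.2)) (f : X → H) {h : X → H}
    {s : Set X} (hh : Set.InjOn h s) : Set.InjOn (fun x => p (f x) (h x)) s :=
  fun x hx y hy hxy => hh hx hy (congrArg Prod.snd (hp hxy : (f x, h x) = (f y, h y)))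

theorem Constraint.exists_injOn_comp_eq_of_mem_proj {H V : Type*} {ℓ : ℕ}
    {R : Set (Fin ℓ → H)} {p₁ : H → H → H} {C : Constraint V H}
    (hp₁inj : Function.Injective (fun x : H × H => p₁ x.1 x.2))
    (hp₁proj : ∀ a b : Fin ℓ → H, Function.Injective a → Function.Injective b →
      (fun i => p₁ (a i) (b i)) ∈ orbitOf R a)
    (hAut : C.AutInvariant R) (hpres : Preserves2 p₁ C.maps)
    (hinjmap : ∃ h ∈ C.maps, Set.InjOn h ↑C.scope)
    {t : Fin ℓ → V} (ht : Function.Injective t) (htC : ∀ i, t i ∈ C.scope)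
    {a : Fin ℓ → H} (ha : a ∈ C.proj t) (hainj : Function.Injective a) :
    ∃ g ∈ C.maps, Set.InjOn g ↑C.scope ∧ g ∘ t = a := by
  obtain ⟨f, hf, rfl⟩ := ha
  obtain ⟨h, hh, hhinj⟩ := hinjmap
  have hht : Function.Injective (h ∘ t) := fun i j hij => ht (hhinj (htC i) (htC j) hij)
  obtain ⟨α, hα, hαa⟩ := hp₁proj (f ∘ t) (h ∘ t) hainj hht
  refine ⟨⇑α.symm ∘ fun x => p₁ (f x) (h x), hAut _ (hpres f hf h hh) _ hα.symm,
    α.symm.injective.comp_injOn (hhinj.binop_right hp₁inj f), ?_⟩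
  funext i
  have hαai := congrFun hαa i
  simp only [Function.comp_apply] at hαai ⊢
  rw [← hαai, Equiv.symm_apply_apply]

theorem statement10_general {H : Type*} {ℓ : ℕ} {R : Set (Fin ℓ → H)}
    {p₁ : H → H → H}
    (hp₁inj : Function.Injective (fun x : H × H => p₁ x.1 x.2))
    (hp₁proj : ∀ a b : Fin ℓ → H, Function.Injective a → Function.Injective b →
      (fun i => p₁ (a i) (b i)) ∈ orbitOf R a)
    {V : Type*} [LinearOrder V] (I : CSPInstance V H)
    (hmin : LMinimal ℓ I)
    (hAut : ∀ C ∈ I.constraints, C.AutInvariant R)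
    (hpres : ∀ C ∈ I.constraints, Preserves2 p₁ C.maps)
    (tv tw : Fin ℓ → V) (htv : StrictMono tv) (htw : StrictMono tw)
    (C : Constraint V H) (hC : C ∈ I.constraints)
    (htvC : ∀ i, tv i ∈ C.scope) (htwC : ∀ i, tw i ∈ C.scope)
    (hinjmap : ∃ f ∈ C.maps, Set.InjOn f ↑C.scope)
    (E1v : Set (Fin ℓ → H))
    (hE1v_inj : ∀ a ∈ I.proj tv, Function.Injective a → a ∈ E1v)
    (E1w : Set (Fin ℓ → H))
    (hE1w : E1w = { a | ∃ b ∈ E1v, ∃ f ∈ C.maps, f ∘ tv = b ∧ f ∘ tw = a }) :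
    ∀ a ∈ I.proj tw, Function.Injective a → a ∈ E1w := by
  intro a ha hainj
  have haC : a ∈ C.proj tw :=
    CSPInstance.proj_subset_proj_of_projConsistent hmin.2 le_rfl hC htwC ha
  obtain ⟨g, hg, hginj, rfl⟩ := Constraint.exists_injOn_comp_eq_of_mem_proj hp₁inj hp₁proj
    (hAut C hC) (hpres C hC) hinjmap htw.injective htwC haC hainj
  have hgtv : g ∘ tv ∈ E1v := hE1v_inj _ ⟨C, hC, htvC, g, hg, rfl⟩
    fun i j hij => htv.injective (hginj (htvC i) (htvC j) hij)
  exact hE1w ▸ ⟨g ∘ tv, hgtv, g, hg, rfl, rfl⟩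

/-- if `E¹_v` is a union of orbits containing all injective tuples of
`proj_v(I)`, then its image `E¹_w` along a constraint containing an injective mapping
contains all injective tuples of `proj_w(I)`. -/
theorem statement10 {H : Type*} [LinearOrder H] {ℓ : ℕ} {R : Set (Fin ℓ → H)}
    {p₁ : H → H → H}
    (hl : 3 ≤ ℓ) (hcount : Countable H) (hinf : Infinite H)
    (hRinj : ∀ a ∈ R, Function.Injective a)
    (hRsymm : ∀ σ : Equiv.Perm (Fin ℓ), ∀ a ∈ R, (a ∘ ⇑σ) ∈ R)
    (hEne : (ESet R).Nonempty) (hNne : (NSet R).Nonempty)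
    (horbE : ∀ a b : Fin ℓ → H, a ∈ ESet R → b ∈ ESet R → b ∈ orbitOf R a)
    (horbN : ∀ a b : Fin ℓ → H, a ∈ NSet R → b ∈ NSet R → b ∈ orbitOf R a)
    (hp₁inj : Function.Injective (fun x : H × H => p₁ x.1 x.2))
    (hp₁can : Canonical2 R p₁)
    (hp₁proj : ∀ a b : Fin ℓ → H, Function.Injective a → Function.Injective b →
      (fun i => p₁ (a i) (b i)) ∈ orbitOf R a)
    {V : Type*} [LinearOrder V] (I : CSPInstance V H)
    (hmin : LMinimal ℓ I)
    (hAut : ∀ C ∈ I.constraints, C.AutInvariant R)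
    (hpres : ∀ C ∈ I.constraints, Preserves2 p₁ C.maps)
    (tv tw : Fin ℓ → V) (htv : StrictMono tv) (htw : StrictMono tw)
    (C : Constraint V H) (hC : C ∈ I.constraints)
    (htvC : ∀ i, tv i ∈ C.scope) (htwC : ∀ i, tw i ∈ C.scope)
    (hinjmap : ∃ f ∈ C.maps, Set.InjOn f ↑C.scope)
    (E1v : Set (Fin ℓ → H))
    (hE1v_sub : E1v ⊆ I.proj tv)
    (hE1v_orb : ∀ a ∈ E1v, orbitOf R a ⊆ E1v)
    (hE1v_inj : ∀ a ∈ I.proj tv, Function.Injective a → a ∈ E1v)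
    (E1w : Set (Fin ℓ → H))
    (hE1w : E1w = { a | ∃ b ∈ E1v, ∃ f ∈ C.maps, f ∘ tv = b ∧ f ∘ tw = a }) :
    ∀ a ∈ I.proj tw, Function.Injective a → a ∈ E1w :=
  statement10_general hp₁inj hp₁proj I hmin hAut hpres tv tw htv htw C hC htvC htwC hinjmap E1v
    hE1v_inj E1w hE1w
end

section
/- Let A be a set, U a finite set, and C a nonempty set of mappings U → A that is preserved by componentwise application of a binary operation p : A² → A that is injective as a function of pairs (p(a,b) = p(a',b') implies a = a' and b = b'). Suppose that for all distinct u,v ∈ U there exists f ∈ C with f(u) ≠ f(v). Then C contains an injective mapping U → A. -/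
open scoped Classical

/- Proof idea: if `f` separates the pairs in `s` and `g` separates `(u, v)`, then by injectivity
of `p` the mapping `u ↦ p (f u) (g u)` separates every pair in `insert (u, v) s`. Induction over
the finitely many pairs of distinct points yields a mapping in `C` separating all of them. -/

section Separation

variable {A U : Type*} {p : A → A → A} {C : Set (U → A)}

theorem Preserves2.exists_mem_forall_ne (hpres : Preserves2 p C) (hne : C.Nonempty)
    (hpinj : Function.Injective (fun x : A × A => p x.1 x.2)) (s : Finset (U × U))
    (hs : ∀ x ∈ s, ∃ f ∈ C, f x.1 ≠ f x.2) :
    ∃ f ∈ C, ∀ x ∈ s, f x.1 ≠ f x.2 := by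
  classical
  induction s using Finset.induction_on with
  | empty => exact ⟨hne.some, hne.some_mem, by simp⟩
  | insert x s _ ih =>
    obtain ⟨f, hfC, hf⟩ := ih fun y hy => hs y (Finset.mem_insert_of_mem hy)
    obtain ⟨g, hgC, hg⟩ := hs x (Finset.mem_insert_self x s)
    have hsplit : ∀ y : U × U, p (f y.1) (g y.1) = p (f y.2) (g y.2) →
        f y.1 = f y.2 ∧ g y.1 = g y.2 := fun y h =>
      Prod.ext_iff.mp (hpinj (a₁ := (f y.1, g y.1)) (a₂ := (f y.2, g y.2)) h)
    refine ⟨fun u => p (f u) (g u), hpres f hfC g hgC, ?_⟩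
    rintro y hy hpy
    rcases Finset.mem_insert.mp hy with rfl | hy
    · exact hg (hsplit y hpy).2
    · exact hf y hy (hsplit y hpy).1

end Separation

/-- a nonempty set of mappings preserved by a binary injection, in which every
pair of distinct coordinates is separated by some mapping, contains an injective mapping. -/
theorem statement11 {A U : Type*} [Finite U] (C : Set (U → A)) (hne : C.Nonempty)
    (p : A → A → A) (hpinj : Function.Injective (fun x : A × A => p x.1 x.2))
    (hpres : ∀ f ∈ C, ∀ g ∈ C, (fun u => p (f u) (g u)) ∈ C)
    (hsep : ∀ u v : U, u ≠ v → ∃ f ∈ C, f u ≠ f v) :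
    ∃ f ∈ C, Function.Injective f := by
  have : Fintype U := Fintype.ofFinite U
  obtain ⟨f, hfC, hf⟩ := Preserves2.exists_mem_forall_ne hpres hne hpinj
    (Finset.univ.filter fun x : U × U => x.1 ≠ x.2)
    (fun x hx => hsep x.1 x.2 (Finset.mem_filter.mp hx).2)
  refine ⟨f, hfC, fun u v huv => ?_⟩
  by_contra hne_uv
  exact hf (u, v) (Finset.mem_filter.mpr ⟨Finset.mem_univ _, hne_uv⟩) huv
end

section
/- Let H be an infinite set, ℓ ≥ 2, I the set of injective ℓ-tuples over H, and I₂ the set of injective pairs over H. Let f : H² → H be such that, applied componentwise to ℓ-tuples, f(a,b) ∈ I and f(b,a) ∈ I whenever a ∈ H^ℓ and b ∈ I. Then, applied componentwise to pairs, f(c,d) ∈ I₂ and f(d,c) ∈ I₂ whenever c ∈ H² and d ∈ I₂. -/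
open scoped Classical

/-! Extend `d` to an injective `ℓ`-tuple `b` (there is room since `H` is infinite) and `c` to an
arbitrary `ℓ`-tuple `a` along the inclusion `Fin 2 ↪ Fin ℓ`; the pair `f(c,d)` is the
restriction of the injective tuple `f(a,b)` to the first two coordinates. -/

open Function

section Extension

variable {ι κ H : Type*} [Finite κ] [Infinite H] {g : ι → κ}

theorem Function.Injective.exists_injective_comp_eq (hg : Injective g) {d : ι → H}
    (hd : Injective d) : ∃ b : κ → H, Injective b ∧ b ∘ g = d := by
  obtain ⟨n, ⟨φ⟩⟩ := Finite.exists_equiv_fin κ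
  have he : Injective (Infinite.natEmbedding H ∘ Fin.val ∘ φ) :=
    (Infinite.natEmbedding H).injective.comp (Fin.val_injective.comp φ.injective)
  have : Finite ι := Finite.of_injective g hg
  obtain ⟨σ, hσ⟩ := Equiv.Perm.exists_extending_pair _ d (he.comp hg) hd
  exact ⟨σ ∘ _, σ.injective.comp he, funext hσ⟩

theorem Function.Injective.injective_map₂_of_forall (hg : Injective g) {f : H → H → H}
    (hf : ∀ a b : κ → H, Injective b → Injective fun j => f (a j) (b j))
    (c d : ι → H) (hd : Injective d) : Injective fun i => f (c i) (d i) := by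
  obtain ⟨b, hb, rfl⟩ := hg.exists_injective_comp_eq hd
  rw [← Function.extend_comp hg c b]
  exact (hf _ b hb).comp hg

end Extension

/-- a binary operation absorbing into the injective `ℓ`-tuples also absorbs
into the injective pairs. -/
theorem statement12 {H : Type*} [Infinite H] {ℓ : ℕ} (hl : 2 ≤ ℓ) (f : H → H → H)
    (habs : ∀ a b : Fin ℓ → H, Function.Injective b →
      Function.Injective (fun i => f (a i) (b i)) ∧
      Function.Injective (fun i => f (b i) (a i))) :
    ∀ c d : Fin 2 → H, Function.Injective d →
      Function.Injective (fun i => f (c i) (d i)) ∧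
      Function.Injective (fun i => f (d i) (c i)) := by
  intro c d hd
  have hincl : Injective (Fin.castLE hl) := Fin.castLE_injective hl
  exact ⟨hincl.injective_map₂_of_forall (fun a b hb => (habs a b hb).1) c d hd,
    hincl.injective_map₂_of_forall (f := fun x y => f y x) (fun a b hb => (habs a b hb).2) c d hd⟩
end
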